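/- arXiv:2501.12045 — 2 statements merged into one kernel-verified Lean document; each statement's English description precedes it below -/
import Mathlib

section
/- A position M = (n_0, n_1, n_2, n_3, n_4, n_5) in circular nim CN(6,3) is a P-position if and only if n_0 + n_1 = n_3 + n_4 and n_1 + n_2 = n_4 + n_5. -/
/-- `IsN move x`: `x` is an N-position (next player wins) for the game with
move relation `move` (least fixed point; correct for short games). -/
inductive IsN {α : Type*} (move : α → α → Prop) : α → Prop
  | intro (x y : α) (hxy : move x y) (hy : ∀ z, move y z → IsN move z) : IsN move x

/-- `IsP move x`: `x` is a P-position (previous player wins) under normal play. -/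
def IsP {α : Type*} (move : α → α → Prop) (x : α) : Prop :=
  ∀ y, move x y → IsN move y

/-- Move relation of extended circular nim `ECN(m_S, k)`: reduce some piles,
all lying among `k` piles taken every `s`-th pile (for some `s ∈ S`) starting
at some index `i`, removing at least one token in total. -/
def ecnMove (m : ℕ) (S : Set ℕ) (k : ℕ) (x y : Fin m → ℕ) : Prop :=
  y ≠ x ∧ (∀ j, y j ≤ x j) ∧
    ∃ s ∈ S, ∃ i : ℕ, ∀ j : Fin m, y j ≠ x j → ∃ t < k, (j : ℕ) = (i + t * s) % m

/-- `cyc m Q n` : some cyclic rotation of `n`, or of its reversal, satisfies `Q`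
(the relation `M ∈_↻ P`). -/
def cyc (m : ℕ) (Q : (Fin m → ℕ) → Prop) (n : Fin m → ℕ) : Prop :=
  ∃ r : ℕ,
    Q (fun j => n ⟨(j.1 + r) % m, Nat.mod_lt _ (Nat.lt_of_le_of_lt (Nat.zero_le _) j.isLt)⟩) ∨
    Q (fun j => n ⟨(r + (m - j.1)) % m, Nat.mod_lt _ (Nat.lt_of_le_of_lt (Nat.zero_le _) j.isLt)⟩)

def Pp (n : Fin 6 → ℕ) : Prop :=
  n 0 + n 1 = n 3 + n 4 ∧ n 1 + n 2 = n 4 + n 5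

lemma windows (a0 a1 a2 a3 a4 a5 : ℕ) :
    (a3+a4 ≤ a0+a1 ∧ a4+a5 ≤ a1+a2 ∧ a3 ≤ a0+a5 ∧ a5 ≤ a2+a3) ∨
    (a4+a5 ≤ a1+a2 ∧ a5+a0 ≤ a2+a3 ∧ a4 ≤ a1+a0 ∧ a0 ≤ a3+a4) ∨
    (a5+a0 ≤ a2+a3 ∧ a0+a1 ≤ a3+a4 ∧ a5 ≤ a2+a1 ∧ a1 ≤ a4+a5) ∨
    (a0+a1 ≤ a3+a4 ∧ a1+a2 ≤ a4+a5 ∧ a0 ≤ a3+a2 ∧ a2 ≤ a5+a0) ∨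
    (a1+a2 ≤ a4+a5 ∧ a2+a3 ≤ a5+a0 ∧ a1 ≤ a4+a3 ∧ a3 ≤ a0+a1) ∨
    (a2+a3 ≤ a5+a0 ∧ a3+a4 ≤ a0+a1 ∧ a2 ≤ a5+a4 ∧ a4 ≤ a1+a2) := by
  omega

lemma move_sum_lt {x y : Fin 6 → ℕ} (h : ecnMove 6 {1} 3 x y) :
    ∑ j, y j < ∑ j, x j := by
  obtain ⟨hne, hle, -⟩ := h
  by_cases hex : ∃ j, y j < x j
  · obtain ⟨j, hj⟩ := hex
    exact Finset.sum_lt_sum (fun i _ => hle i) ⟨j, Finset.mem_univ j, hj⟩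
  · exact absurd (funext fun j => le_antisymm (hle j)
      (not_lt.mp fun hc => hex ⟨j, hc⟩)) hne

lemma ppA {x y : Fin 6 → ℕ} (hx : Pp x) (hm : ecnMove 6 {1} 3 x y) : ¬ Pp y := by
  rintro ⟨hy1, hy2⟩
  obtain ⟨hx1, hx2⟩ := hx
  obtain ⟨hne, hle, s, hs, i, hwin⟩ := hm
  have hs1 : s = 1 := hs
  subst hs1
  have key : ∀ (v : ℕ) (hv : v < 6), (∀ t, t < 3 → v ≠ (i + t * 1) % 6) →
      y ⟨v, hv⟩ = x ⟨v, hv⟩ := by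
    intro v hv hvt
    by_contra hc
    obtain ⟨t, ht, he⟩ := hwin ⟨v, hv⟩ hc
    exact hvt t ht he
  have hk : i % 6 = 0 ∨ i % 6 = 1 ∨ i % 6 = 2 ∨ i % 6 = 3 ∨ i % 6 = 4 ∨ i % 6 = 5 := by
    omega
  have l0 := hle 0; have l1 := hle 1; have l2 := hle 2
  have l3 := hle 3; have l4 := hle 4; have l5 := hle 5
  have hE : (y 3 = x 3 ∧ y 4 = x 4 ∧ y 5 = x 5) ∨
      (y 4 = x 4 ∧ y 5 = x 5 ∧ y 0 = x 0) ∨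
      (y 5 = x 5 ∧ y 0 = x 0 ∧ y 1 = x 1) ∨
      (y 0 = x 0 ∧ y 1 = x 1 ∧ y 2 = x 2) ∨
      (y 1 = x 1 ∧ y 2 = x 2 ∧ y 3 = x 3) ∨
      (y 2 = x 2 ∧ y 3 = x 3 ∧ y 4 = x 4) := by
    rcases hk with h|h|h|h|h|h
    · exact Or.inl ⟨key 3 (by norm_num) (fun t ht => by omega),
        key 4 (by norm_num) (fun t ht => by omega),
        key 5 (by norm_num) (fun t ht => by omega)⟩
    · exact Or.inr (Or.inl ⟨key 4 (by norm_num) (fun t ht => by omega),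
        key 5 (by norm_num) (fun t ht => by omega),
        key 0 (by norm_num) (fun t ht => by omega)⟩)
    · exact Or.inr (Or.inr (Or.inl ⟨key 5 (by norm_num) (fun t ht => by omega),
        key 0 (by norm_num) (fun t ht => by omega),
        key 1 (by norm_num) (fun t ht => by omega)⟩))
    · exact Or.inr (Or.inr (Or.inr (Or.inl ⟨key 0 (by norm_num) (fun t ht => by omega),
        key 1 (by norm_num) (fun t ht => by omega),
        key 2 (by norm_num) (fun t ht => by omega)⟩)))
    · exact Or.inr (Or.inr (Or.inr (Or.inr (Or.inl
        ⟨key 1 (by norm_num) (fun t ht => by omega),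
        key 2 (by norm_num) (fun t ht => by omega),
        key 3 (by norm_num) (fun t ht => by omega)⟩))))
    · exact Or.inr (Or.inr (Or.inr (Or.inr (Or.inr
        ⟨key 2 (by norm_num) (fun t ht => by omega),
        key 3 (by norm_num) (fun t ht => by omega),
        key 4 (by norm_num) (fun t ht => by omega)⟩))))
  have q : y 0 = x 0 ∧ y 1 = x 1 ∧ y 2 = x 2 ∧ y 3 = x 3 ∧ y 4 = x 4 ∧ y 5 = x 5 := by
    omega
  obtain ⟨q0, q1, q2, q3, q4, q5⟩ := q
  apply hne
  funext j
  fin_cases j <;> assumption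

lemma existsMove {x : Fin 6 → ℕ} (hx : ¬ Pp x) :
    ∃ y, ecnMove 6 {1} 3 x y ∧ Pp y := by
  rcases windows (x 0) (x 1) (x 2) (x 3) (x 4) (x 5) with hw|hw|hw|hw|hw|hw
  · -- window starting at 0
    obtain ⟨m1, hm⟩ : ∃ m1, m1 ≤ x 1 ∧ m1 ≤ x 3 + x 4 ∧ m1 ≤ x 4 + x 5 ∧
        x 3 + x 4 ≤ x 0 + m1 ∧ x 4 + x 5 ≤ x 2 + m1 :=
      ⟨min (x 1) (min (x 3 + x 4) (x 4 + x 5)), by omega⟩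
    have hPpY : Pp (fun j : Fin 6 => if j.val = 0 then x 3 + x 4 - m1 else if j.val = 1 then m1 else if j.val = 2 then x 4 + x 5 - m1 else x j) :=
      ⟨show (x 3 + x 4 - m1) + m1 = x 3 + x 4 by omega,
       show m1 + (x 4 + x 5 - m1) = x 4 + x 5 by omega⟩
    refine ⟨_, ⟨fun h => hx (h ▸ hPpY), ?_, 1, rfl, 0, ?_⟩, hPpY⟩
    · intro j; fin_cases j
      · show x 3 + x 4 - m1 ≤ x 0; omega
      · show m1 ≤ x 1; omega
      · show x 4 + x 5 - m1 ≤ x 2; omega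
      · exact le_rfl
      · exact le_rfl
      · exact le_rfl
    · intro j hj; fin_cases j
      · exact ⟨0, by norm_num, rfl⟩
      · exact ⟨1, by norm_num, rfl⟩
      · exact ⟨2, by norm_num, rfl⟩
      · exact absurd rfl hj
      · exact absurd rfl hj
      · exact absurd rfl hj
  · -- window starting at 1
    obtain ⟨m1, hm⟩ : ∃ m1, m1 ≤ x 2 ∧ m1 ≤ x 4 + x 5 ∧ m1 ≤ x 5 + x 0 ∧
        x 4 + x 5 ≤ x 1 + m1 ∧ x 5 + x 0 ≤ x 3 + m1 :=
      ⟨min (x 2) (min (x 4 + x 5) (x 5 + x 0)), by omega⟩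
    have hPpY : Pp (fun j : Fin 6 => if j.val = 1 then x 4 + x 5 - m1 else if j.val = 2 then m1 else if j.val = 3 then x 5 + x 0 - m1 else x j) :=
      ⟨show x 0 + (x 4 + x 5 - m1) = (x 5 + x 0 - m1) + x 4 by omega,
       show (x 4 + x 5 - m1) + m1 = x 4 + x 5 by omega⟩
    refine ⟨_, ⟨fun h => hx (h ▸ hPpY), ?_, 1, rfl, 1, ?_⟩, hPpY⟩
    · intro j; fin_cases j
      · exact le_rfl
      · show x 4 + x 5 - m1 ≤ x 1; omega
      · show m1 ≤ x 2; omega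
      · show x 5 + x 0 - m1 ≤ x 3; omega
      · exact le_rfl
      · exact le_rfl
    · intro j hj; fin_cases j
      · exact absurd rfl hj
      · exact ⟨0, by norm_num, rfl⟩
      · exact ⟨1, by norm_num, rfl⟩
      · exact ⟨2, by norm_num, rfl⟩
      · exact absurd rfl hj
      · exact absurd rfl hj
  · -- window starting at 2
    obtain ⟨m1, hm⟩ : ∃ m1, m1 ≤ x 3 ∧ m1 ≤ x 5 + x 0 ∧ m1 ≤ x 0 + x 1 ∧
        x 5 + x 0 ≤ x 2 + m1 ∧ x 0 + x 1 ≤ x 4 + m1 :=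
      ⟨min (x 3) (min (x 5 + x 0) (x 0 + x 1)), by omega⟩
    have hPpY : Pp (fun j : Fin 6 => if j.val = 2 then x 5 + x 0 - m1 else if j.val = 3 then m1 else if j.val = 4 then x 0 + x 1 - m1 else x j) :=
      ⟨show x 0 + x 1 = m1 + (x 0 + x 1 - m1) by omega,
       show x 1 + (x 5 + x 0 - m1) = (x 0 + x 1 - m1) + x 5 by omega⟩
    refine ⟨_, ⟨fun h => hx (h ▸ hPpY), ?_, 1, rfl, 2, ?_⟩, hPpY⟩
    · intro j; fin_cases j
      · exact le_rfl
      · exact le_rfl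
      · show x 5 + x 0 - m1 ≤ x 2; omega
      · show m1 ≤ x 3; omega
      · show x 0 + x 1 - m1 ≤ x 4; omega
      · exact le_rfl
    · intro j hj; fin_cases j
      · exact absurd rfl hj
      · exact absurd rfl hj
      · exact ⟨0, by norm_num, rfl⟩
      · exact ⟨1, by norm_num, rfl⟩
      · exact ⟨2, by norm_num, rfl⟩
      · exact absurd rfl hj
  · -- window starting at 3
    obtain ⟨m1, hm⟩ : ∃ m1, m1 ≤ x 4 ∧ m1 ≤ x 0 + x 1 ∧ m1 ≤ x 1 + x 2 ∧
        x 0 + x 1 ≤ x 3 + m1 ∧ x 1 + x 2 ≤ x 5 + m1 :=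
      ⟨min (x 4) (min (x 0 + x 1) (x 1 + x 2)), by omega⟩
    have hPpY : Pp (fun j : Fin 6 => if j.val = 3 then x 0 + x 1 - m1 else if j.val = 4 then m1 else if j.val = 5 then x 1 + x 2 - m1 else x j) :=
      ⟨show x 0 + x 1 = (x 0 + x 1 - m1) + m1 by omega,
       show x 1 + x 2 = m1 + (x 1 + x 2 - m1) by omega⟩
    refine ⟨_, ⟨fun h => hx (h ▸ hPpY), ?_, 1, rfl, 3, ?_⟩, hPpY⟩
    · intro j; fin_cases j
      · exact le_rfl
      · exact le_rfl
      · exact le_rfl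
      · show x 0 + x 1 - m1 ≤ x 3; omega
      · show m1 ≤ x 4; omega
      · show x 1 + x 2 - m1 ≤ x 5; omega
    · intro j hj; fin_cases j
      · exact absurd rfl hj
      · exact absurd rfl hj
      · exact absurd rfl hj
      · exact ⟨0, by norm_num, rfl⟩
      · exact ⟨1, by norm_num, rfl⟩
      · exact ⟨2, by norm_num, rfl⟩
  · -- window starting at 4
    obtain ⟨m1, hm⟩ : ∃ m1, m1 ≤ x 5 ∧ m1 ≤ x 1 + x 2 ∧ m1 ≤ x 2 + x 3 ∧
        x 1 + x 2 ≤ x 4 + m1 ∧ x 2 + x 3 ≤ x 0 + m1 :=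
      ⟨min (x 5) (min (x 1 + x 2) (x 2 + x 3)), by omega⟩
    have hPpY : Pp (fun j : Fin 6 => if j.val = 4 then x 1 + x 2 - m1 else if j.val = 5 then m1 else if j.val = 0 then x 2 + x 3 - m1 else x j) :=
      ⟨show (x 2 + x 3 - m1) + x 1 = x 3 + (x 1 + x 2 - m1) by omega,
       show x 1 + x 2 = (x 1 + x 2 - m1) + m1 by omega⟩
    refine ⟨_, ⟨fun h => hx (h ▸ hPpY), ?_, 1, rfl, 4, ?_⟩, hPpY⟩
    · intro j; fin_cases j
      · show x 2 + x 3 - m1 ≤ x 0; omega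
      · exact le_rfl
      · exact le_rfl
      · exact le_rfl
      · show x 1 + x 2 - m1 ≤ x 4; omega
      · show m1 ≤ x 5; omega
    · intro j hj; fin_cases j
      · exact ⟨2, by norm_num, rfl⟩
      · exact absurd rfl hj
      · exact absurd rfl hj
      · exact absurd rfl hj
      · exact ⟨0, by norm_num, rfl⟩
      · exact ⟨1, by norm_num, rfl⟩
  · -- window starting at 5
    obtain ⟨m1, hm⟩ : ∃ m1, m1 ≤ x 0 ∧ m1 ≤ x 2 + x 3 ∧ m1 ≤ x 3 + x 4 ∧
        x 2 + x 3 ≤ x 5 + m1 ∧ x 3 + x 4 ≤ x 1 + m1 :=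
      ⟨min (x 0) (min (x 2 + x 3) (x 3 + x 4)), by omega⟩
    have hPpY : Pp (fun j : Fin 6 => if j.val = 5 then x 2 + x 3 - m1 else if j.val = 0 then m1 else if j.val = 1 then x 3 + x 4 - m1 else x j) :=
      ⟨show m1 + (x 3 + x 4 - m1) = x 3 + x 4 by omega,
       show (x 3 + x 4 - m1) + x 2 = x 4 + (x 2 + x 3 - m1) by omega⟩
    refine ⟨_, ⟨fun h => hx (h ▸ hPpY), ?_, 1, rfl, 5, ?_⟩, hPpY⟩
    · intro j; fin_cases j
      · show m1 ≤ x 0; omega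
      · show x 3 + x 4 - m1 ≤ x 1; omega
      · exact le_rfl
      · exact le_rfl
      · exact le_rfl
      · show x 2 + x 3 - m1 ≤ x 5; omega
    · intro j hj; fin_cases j
      · exact ⟨1, by norm_num, rfl⟩
      · exact ⟨2, by norm_num, rfl⟩
      · exact absurd rfl hj
      · exact absurd rfl hj
      · exact absurd rfl hj
      · exact ⟨0, by norm_num, rfl⟩

lemma notPp_isN (N : ℕ) : ∀ x : Fin 6 → ℕ, ∑ j, x j ≤ N → ¬ Pp x →
    IsN (ecnMove 6 {1} 3) x := by
  induction N with
  | zero =>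
    intro x hsum hpp
    exfalso
    apply hpp
    have hz : ∀ j, x j = 0 := by
      intro j
      have := Finset.single_le_sum (f := x) (fun i _ => Nat.zero_le _) (Finset.mem_univ j)
      omega
    exact ⟨by rw [hz 0, hz 1, hz 3, hz 4], by rw [hz 1, hz 2, hz 4, hz 5]⟩
  | succ N ih =>
    intro x hsum hpp
    obtain ⟨y, hmy, hpy⟩ := existsMove hpp
    refine IsN.intro x y hmy (fun z hz => ?_)
    have h1 := move_sum_lt hmy
    have h2 := move_sum_lt hz
    exact ih z (by omega) (ppA hpy hz)

lemma isN_notPp {x : Fin 6 → ℕ} (h : IsN (ecnMove 6 {1} 3) x) : ¬ Pp x := by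
  induction h with
  | intro x y hxy hy ih =>
    intro hpx
    obtain ⟨z, hz, hpz⟩ := existsMove (ppA hpx hxy)
    exact ih z hz hpz

theorem cn63_P_iff (n : Fin 6 → ℕ) :
    IsP (ecnMove 6 {1} 3) n ↔ n 0 + n 1 = n 3 + n 4 ∧ n 1 + n 2 = n 4 + n 5 := by
  constructor
  · intro hP
    by_contra hpp
    obtain ⟨y, hmy, hpy⟩ := existsMove (show ¬ Pp n from hpp)
    exact isN_notPp (hP y hmy) hpy
  · intro hpp y hmy
    exact notPp_isN (∑ j, y j) y le_rfl (ppA (show Pp n from hpp) hmy)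
end

section
/- A position M = (n_0, n_1, n_2, n_3, n_4, n_5) in extended circular nim ECN(6_{1,2}, 2) is a P-position if and only if n_0 ⊕ n_3 = n_1 ⊕ n_4 = n_2 ⊕ n_5, where ⊕ denotes bitwise XOR. -/
/-!
The at most two piles touched by a move have indices differing by 1 or 2, so they lie in different
opposite pairs `{r, r + 3}`: a move leaves some pair untouched and changes one pile of a pair
without its partner, so it cannot lead from a position whose pair xors `x r ^^^ x (r + 3)` all
agree to another such position. Conversely, if the pair xors do not agree, let `v` be the smallest
of them. As in Nim, in each of the two other pairs one pile can be lowered so that the pair xor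
becomes `v`, and these two piles, lying in different pairs, can be reduced in a single move. The
total number of tokens drops along moves, so this characterises the P-positions.
-/

open Function Finset

theorem IsN.not_isP {α : Type*} {move : α → α → Prop} {x : α} (h : IsN move x) :
    ¬IsP move x := by
  induction h with
  | intro x y hxy _ ih =>
    intro hP
    obtain ⟨_, z, hyz, hz⟩ := hP y hxy
    exact ih z hyz hz

theorem isP_iff_of_wellFounded {α : Type*} {move : α → α → Prop}
    (hwf : WellFounded (flip move)) (K : α → Prop)
    (hK : ∀ x y, K x → move x y → ¬K y) (hnK : ∀ x, ¬K x → ∃ y, move x y ∧ K y) (x : α) :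
    IsP move x ↔ K x := by
  have key : ∀ x, (K x → IsP move x) ∧ (¬K x → IsN move x) := by
    intro x
    induction x using hwf.induction with
    | _ x ih =>
      refine ⟨fun hx y hxy => (ih y hxy).2 (hK x y hx hxy), fun hx => ?_⟩
      obtain ⟨y, hxy, hy⟩ := hnK x hx
      exact .intro x y hxy ((ih y hxy).1 hy)
  exact ⟨fun hP => by_contra fun hx => ((key x).2 hx).not_isP hP, (key x).1⟩

theorem Nat.xor_le_or_xor_le_of_le_xor {a b t : ℕ} (h : t ≤ a ^^^ b) :
    t ^^^ b ≤ a ∨ t ^^^ a ≤ b := by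
  rcases h.eq_or_lt with rfl | h
  · exact .inl (xor_cancel_right a b).le
  · exact (Nat.lt_xor_cases h).imp le_of_lt le_of_lt

theorem ecnMove.sum_lt {m k : ℕ} {S : Set ℕ} {x y : Fin m → ℕ} (h : ecnMove m S k x y) :
    ∑ j, y j < ∑ j, x j :=
  Fintype.sum_strictMono (lt_of_le_of_ne h.2.1 h.1)

theorem ecnMove_wellFounded (m : ℕ) (S : Set ℕ) (k : ℕ) : WellFounded (flip (ecnMove m S k)) :=
  Subrelation.wf (fun h => ecnMove.sum_lt h)
    (InvImage.wf (fun x : Fin m → ℕ => ∑ j, x j) wellFounded_lt)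

theorem ecnMove_six_iff {x y : Fin 6 → ℕ} :
    ecnMove 6 {1, 2} 2 x y ↔ y ≠ x ∧ (∀ j, y j ≤ x j) ∧
      ∃ i s : Fin 6, (s = 1 ∨ s = 2) ∧ ∀ j, y j ≠ x j → j = i ∨ j = i + s := by
  refine and_congr_right fun _ => and_congr_right fun _ => ⟨?_, ?_⟩
  · rintro ⟨s, hs, i, h⟩
    have hs : s = 1 ∨ s = 2 := hs
    refine ⟨Fin.ofNat 6 i, Fin.ofNat 6 s, by rcases hs with rfl | rfl <;> decide, fun j hj => ?_⟩
    obtain ⟨t, ht, hj⟩ := h j hj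
    interval_cases t
    · exact .inl (Fin.ext (by simp only [Fin.val_ofNat]; omega))
    · exact .inr (Fin.ext (by simp only [Fin.val_add, Fin.val_ofNat]; omega))
  · rintro ⟨i, s, hs, h⟩
    refine ⟨s, by rcases hs with rfl | rfl <;> simp, i, fun j hj => ?_⟩
    rcases h j hj with rfl | rfl
    · exact ⟨0, by omega, by simp [Nat.mod_eq_of_lt j.isLt]⟩
    · exact ⟨1, by omega, by simp [Fin.val_add]⟩

def oppXor (x : Fin 6 → ℕ) (r : Fin 6) : ℕ := x r ^^^ x (r + 3)

def OppXorConst (x : Fin 6 → ℕ) : Prop := ∀ r r', oppXor x r = oppXor x r'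

theorem oppXor_add_three (x : Fin 6 → ℕ) (r : Fin 6) : oppXor x (r + 3) = oppXor x r := by
  rw [oppXor, oppXor, add_assoc, show (3 + 3 : Fin 6) = 0 from rfl, add_zero, Nat.xor_comm]

theorem oppXor_update_self (x : Fin 6 → ℕ) (p : Fin 6) (a : ℕ) :
    oppXor (update x p a) p = a ^^^ x (p + 3) := by
  rw [oppXor, update_self, update_of_ne (by simp)]

theorem oppXor_update_of_ne (x : Fin 6 → ℕ) {p r : Fin 6} (a : ℕ) (h : p ≠ r) (h' : p ≠ r + 3) :
    oppXor (update x p a) r = oppXor x r := by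
  rw [oppXor, oppXor, update_of_ne h.symm, update_of_ne h'.symm]

theorem oppXorConst_iff {x : Fin 6 → ℕ} :
    OppXorConst x ↔ x 0 ^^^ x 3 = x 1 ^^^ x 4 ∧ x 1 ^^^ x 4 = x 2 ^^^ x 5 := by
  refine ⟨fun h => ⟨h 0 1, h 1 2⟩, fun ⟨h₁, h₂⟩ r r' => ?_⟩
  suffices h : ∀ r, oppXor x r = oppXor x 0 by rw [h r, h r']
  intro r
  fin_cases r <;> simp [oppXor, h₁, h₂, Nat.xor_comm]

theorem oppXorConst_of_oppXor_eq {x : Fin 6 → ℕ} {r : Fin 6} {v : ℕ} (h₀ : oppXor x r = v)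
    (h₁ : oppXor x (r + 1) = v) (h₂ : oppXor x (r + 2) = v) : OppXorConst x := by
  suffices h : ∀ j, oppXor x j = v by intro j j'; rw [h, h]
  intro j
  obtain ⟨c, rfl⟩ : ∃ c, j = r + c := ⟨j - r, by abel⟩
  fin_cases c
  · simpa using h₀
  · exact h₁
  · exact h₂
  · rw [← oppXor_add_three] at h₀; simpa using h₀
  · rw [← oppXor_add_three, add_assoc] at h₁; exact h₁
  · rw [← oppXor_add_three, add_assoc] at h₂; exact h₂

theorem ecnMove_six_fixes_pairs {x y : Fin 6 → ℕ} (h : ecnMove 6 {1, 2} 2 x y) :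
    (∃ r, y r = x r ∧ y (r + 3) = x (r + 3)) ∧ ∀ k, y k ≠ x k → y (k + 3) = x (k + 3) := by
  obtain ⟨-, -, i, s, hs, hsupp⟩ := ecnMove_six_iff.mp h
  have fixed : ∀ j, j ≠ i → j ≠ i + s → y j = x j := fun j h₁ h₂ =>
    by_contra fun hj => (hsupp j hj).elim h₁ h₂
  have free : ∀ i s : Fin 6, (s = 1 ∨ s = 2) →
      ∃ r, r ≠ i ∧ r ≠ i + s ∧ r + 3 ≠ i ∧ r + 3 ≠ i + s := by decide
  have opp : ∀ i s k : Fin 6, (s = 1 ∨ s = 2) → (k = i ∨ k = i + s) →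
      k + 3 ≠ i ∧ k + 3 ≠ i + s := by decide
  obtain ⟨r, hr₁, hr₂, hr₃, hr₄⟩ := free i s hs
  refine ⟨⟨r, fixed r hr₁ hr₂, fixed _ hr₃ hr₄⟩, fun k hk => ?_⟩
  obtain ⟨hk₁, hk₂⟩ := opp i s k hs (hsupp k hk)
  exact fixed _ hk₁ hk₂

theorem ecnMove_six_update_update {x : Fin 6 → ℕ} {p q : Fin 6} (hqp : q ≠ p) (hqp' : q ≠ p + 3)
    {a b : ℕ} (ha : a ≤ x p) (hb : b ≤ x q) (hne : update (update x p a) q b ≠ x) :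
    ecnMove 6 {1, 2} 2 x (update (update x p a) q b) := by
  refine ecnMove_six_iff.mpr ⟨hne, fun j => ?_, ?_⟩
  · rcases eq_or_ne j q with rfl | hjq
    · simpa using hb
    rcases eq_or_ne j p with rfl | hjp
    · simpa [hjq] using ha
    · simp [hjq, hjp]
  · have steps : ∀ p q : Fin 6, q ≠ p → q ≠ p + 3 → ∃ i s : Fin 6, (s = 1 ∨ s = 2) ∧
        (p = i ∧ q = i + s ∨ q = i ∧ p = i + s) := by decide
    obtain ⟨i, s, hs, hpq⟩ := steps p q hqp hqp'
    refine ⟨i, s, hs, fun j hj => ?_⟩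
    have hjpq : j = p ∨ j = q := by
      by_contra! h
      simp [h.1, h.2] at hj
    rcases hpq with ⟨rfl, rfl⟩ | ⟨rfl, rfl⟩ <;> tauto

theorem not_oppXorConst_of_ecnMove {x y : Fin 6 → ℕ} (hx : OppXorConst x)
    (h : ecnMove 6 {1, 2} 2 x y) : ¬OppXorConst y := by
  intro hy
  obtain ⟨⟨r, hr, hr'⟩, hpartner⟩ := ecnMove_six_fixes_pairs h
  obtain ⟨k, hk⟩ := Function.ne_iff.mp h.1
  have : oppXor y k = oppXor x k := by
    rw [hy k r, hx k r, oppXor, oppXor, hr, hr']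
  rw [oppXor, oppXor, hpartner k hk, Nat.xor_left_inj] at this
  exact hk this

theorem exists_xor_le_of_le_oppXor {x : Fin 6 → ℕ} {r : Fin 6} {v : ℕ} (h : v ≤ oppXor x r) :
    ∃ p, (p = r ∨ p = r + 3) ∧ v ^^^ x (p + 3) ≤ x p := by
  rcases Nat.xor_le_or_xor_le_of_le_xor h with h | h
  · exact ⟨r, .inl rfl, h⟩
  · refine ⟨r + 3, .inr rfl, ?_⟩
    rwa [add_assoc, show (3 + 3 : Fin 6) = 0 from rfl, add_zero]

theorem exists_ecnMove_oppXorConst {x : Fin 6 → ℕ} (hx : ¬OppXorConst x) :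
    ∃ y, ecnMove 6 {1, 2} 2 x y ∧ OppXorConst y := by
  obtain ⟨r, -, hmin⟩ := exists_min_image univ (oppXor x) univ_nonempty
  obtain ⟨p, hp, hpv⟩ := exists_xor_le_of_le_oppXor (hmin (r + 1) (mem_univ _))
  obtain ⟨q, hq, hqv⟩ := exists_xor_le_of_le_oppXor (hmin (r + 2) (mem_univ _))
  have classes : ∀ r p q : Fin 6, (p = r + 1 ∨ p = r + 1 + 3) → (q = r + 2 ∨ q = r + 2 + 3) →
      p ≠ r ∧ p ≠ r + 3 ∧ q ≠ r ∧ q ≠ r + 3 ∧ q ≠ p ∧ q ≠ p + 3 ∧ q + 3 ≠ p := by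
    decide
  obtain ⟨hpr, hpr', hqr, hqr', hqp, hqp', hqp''⟩ := classes r p q hp hq
  set v := oppXor x r
  set y := update (update x p (v ^^^ x (p + 3))) q (v ^^^ x (q + 3))
  have hy : OppXorConst y := by
    refine oppXorConst_of_oppXor_eq (r := r) (v := v) ?_ ?_ ?_
    · rw [oppXor_update_of_ne _ _ hqr hqr', oppXor_update_of_ne _ _ hpr hpr']
    · have : oppXor y (r + 1) = oppXor y p := by
        rcases hp with rfl | rfl <;> simp only [oppXor_add_three]
      rw [this, oppXor_update_of_ne _ _ hqp hqp', oppXor_update_self, xor_cancel_right]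
    · have : oppXor y (r + 2) = oppXor y q := by
        rcases hq with rfl | rfl <;> simp only [oppXor_add_three]
      rw [this, oppXor_update_self, update_of_ne hqp'', xor_cancel_right]
  exact ⟨y, ecnMove_six_update_update hqp hqp' hpv hqv fun h => hx (h ▸ hy), hy⟩

theorem ecn6_12_2_P_iff (n : Fin 6 → ℕ) :
    IsP (ecnMove 6 {1, 2} 2) n ↔
      n 0 ^^^ n 3 = n 1 ^^^ n 4 ∧ n 1 ^^^ n 4 = n 2 ^^^ n 5 := by
  rw [← oppXorConst_iff]
  exact isP_iff_of_wellFounded (ecnMove_wellFounded 6 {1, 2} 2) OppXorConst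
    (fun _ _ => not_oppXorConst_of_ecnMove) (fun _ => exists_ecnMove_oppXorConst) n
end
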